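/- If Γ' is a triangulation of a surface, then every zigzag e_1, e_2, e_3, … in Γ' extends to a zigzag e_1, e'_1, e''_1, e_2, e'_2, e''_2, e_3, … in the stellar subdivision T(Γ'), where e'_i and e''_i are edges incident to the new face-vertices; consequently T(Γ') is z-knotted if and only if Γ' is z-knotted. -/

import Mathlib

open Finset
open scoped Classical

/-- A combinatorial triangulation: a finite collection of (triangular) faces,
each given as a finite set of vertices. -/
structure Triangulation (V : Type) where
  faces : Finset (Finset V)

namespace Triangulation

variable {V : Type} [DecidableEq V] (T : Triangulation V)

/-- The edges: the 2-element subsets of faces. -/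
def edges : Finset (Finset V) := T.faces.biUnion fun f => f.powersetCard 2

/-- The vertices actually used by the triangulation. -/
def verts : Finset V := T.faces.sup id

/-- The combinatorial axioms of a triangulation of a closed surface:
faces are triangles, every edge lies in exactly two faces, and two distinct
faces meet in at most an edge. -/
def IsProper : Prop :=
  (∀ f ∈ T.faces, f.card = 3) ∧
  (∀ e ∈ T.edges, (T.faces.filter fun f => e ⊆ f).card = 2) ∧
  (∀ f ∈ T.faces, ∀ g ∈ T.faces, f ≠ g → (f ∩ g).card ≤ 2)

/-- The underlying (simple) graph of the triangulation. -/
def graph : SimpleGraph V where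
  Adj x y := x ≠ y ∧ ({x, y} : Finset V) ∈ T.edges
  symm := ⟨fun x y h => ⟨h.1.symm, by rw [Finset.pair_comm y x]; exact h.2⟩⟩
  loopless := ⟨fun x h => h.1 rfl⟩

/-- A zigzag: a bi-infinite periodic sequence of edges `e i` together with the
face `f i` containing the consecutive edges `e i` and `e (i+1)`, such that
consecutive faces are distinct and edges two apart are disjoint.
`head i` is the (unique) common vertex of `e i` and `e (i+1)`; thus the `i`-th
traversal goes from `head (i-1)` to `head i`. -/
structure Zigzag where
  e : ℤ → Finset V
  f : ℤ → Finset V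
  head : ℤ → V
  e_mem : ∀ i, e i ∈ T.edges
  f_mem : ∀ i, f i ∈ T.faces
  sub_left : ∀ i, e i ⊆ f i
  sub_right : ∀ i, e (i + 1) ⊆ f i
  edges_ne : ∀ i, e i ≠ e (i + 1)
  faces_ne : ∀ i, f i ≠ f (i + 1)
  disj : ∀ i, Disjoint (e i) (e (i + 2))
  inter_eq : ∀ i, e i ∩ e (i + 1) = {head i}
  exists_period : ∃ n : ℕ, 0 < n ∧ ∀ i, e (i + n) = e i ∧ f (i + n) = f i ∧ head (i + n) = head i

namespace Zigzag

variable {T}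

/-- The length of a zigzag: the minimal period of its edge sequence. -/
noncomputable def length (Z : Zigzag T) : ℕ :=
  sInf {n : ℕ | 0 < n ∧ ∀ i, Z.e (i + n) = Z.e i}

/-- How many times the edge `a` occurs in one (minimal) period of `Z`. -/
noncomputable def mult (Z : Zigzag T) (a : Finset V) : ℕ :=
  ((Finset.range Z.length).filter fun i => Z.e (i : ℤ) = a).card

/-- The direction (tail, head) of the `i`-th traversal of `Z`. -/
def dir (Z : Zigzag T) (i : ℤ) : V × V := (Z.head (i - 1), Z.head i)

/-- Two zigzags are the same cyclic sequence up to rotation or rotation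
combined with reversal. -/
def Equiv (Z W : Zigzag T) : Prop :=
  (∃ k : ℤ, ∀ i, W.e i = Z.e (i + k)) ∨ (∃ k : ℤ, ∀ i, W.e i = Z.e (k - i))

end Zigzag

/-- A triangulation is z-knotted if it has a single zigzag up to
rotation and reversal. -/
def IsZKnotted : Prop := Nonempty (Zigzag T) ∧ ∀ Z W : Zigzag T, Z.Equiv W

/-- A z-orientation: a collection of pairwise non-equivalent zigzags which
double covers the edge set. -/
structure ZOrientation where
  zigzags : List (Zigzag T)
  cover : ∀ a ∈ T.edges, (zigzags.map fun Z => Z.mult a).sum = 2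
  nonequiv : zigzags.Pairwise fun Z W => ¬ Z.Equiv W

namespace ZOrientation

variable {T}

/-- All traversals of the edge `a` by the distinguished zigzags go in the
direction `d`. -/
def dirOf (τ : ZOrientation T) (a : Finset V) (d : V × V) : Prop :=
  ∀ Z ∈ τ.zigzags, ∀ i : ℤ, Z.e i = a → Z.dir i = d

/-- An edge of type II: both traversals go in the same direction. -/
def TypeII (τ : ZOrientation T) (a : Finset V) : Prop := ∃ d, τ.dirOf a d

/-- An edge of type I: the two traversals go in different directions. -/
def TypeI (τ : ZOrientation T) (a : Finset V) : Prop := ¬ τ.TypeII a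

/-- A vertex of type I: it belongs only to edges of type I. -/
def VertexTypeI (τ : ZOrientation T) (x : V) : Prop :=
  ∀ a ∈ T.edges, x ∈ a → τ.TypeI a

/-- A vertex of type II: it belongs to some edge of type II. -/
def VertexTypeII (τ : ZOrientation T) (x : V) : Prop :=
  ∃ a ∈ T.edges, x ∈ a ∧ τ.TypeII a

/-- A face of type I: exactly one of its edges is of type II
(the other two being of type I). -/
def FaceTypeI (τ : ZOrientation T) (f : Finset V) : Prop :=
  ∃! a : Finset V, a ∈ f.powersetCard 2 ∧ τ.TypeII a

/-- A face of type II: all its edges are of type II and their directions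
form a directed cycle. -/
def FaceTypeII (τ : ZOrientation T) (f : Finset V) : Prop :=
  ∃ x y z : V, f = {x, y, z} ∧ x ≠ y ∧ y ≠ z ∧ x ≠ z ∧
    τ.dirOf {x, y} (x, y) ∧ τ.dirOf {y, z} (y, z) ∧ τ.dirOf {z, x} (z, x)

/-- A homogeneous zigzag: it contains precisely two edges of type I after each
edge of type II, i.e. it is a cyclic sequence of blocks (II, I, I). -/
def Homogeneous (τ : ZOrientation T) (Z : Zigzag T) : Prop :=
  ∃ k : ℤ, ∀ i : ℤ, τ.TypeII (Z.e (k + 3 * i)) ∧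
    τ.TypeI (Z.e (k + 3 * i + 1)) ∧ τ.TypeI (Z.e (k + 3 * i + 2))

/-- The in-degree of a vertex in the digraph of type II edges. -/
noncomputable def inDeg (τ : ZOrientation T) (x : V) : ℕ :=
  (T.edges.filter fun a => τ.TypeII a ∧ ∃ u, a = {u, x} ∧ τ.dirOf a (u, x)).card

/-- The out-degree of a vertex in the digraph of type II edges. -/
noncomputable def outDeg (τ : ZOrientation T) (x : V) : ℕ :=
  (T.edges.filter fun a => τ.TypeII a ∧ ∃ u, a = {x, u} ∧ τ.dirOf a (x, u)).card

/-- A special pair: two type II edges with a common vertex which are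
interleaved in the zigzag `Z` as a, b, a, b within one period. -/
def SpecialPair (τ : ZOrientation T) (Z : Zigzag T) (a b : Finset V) : Prop :=
  a ≠ b ∧ (a ∩ b).Nonempty ∧ τ.TypeII a ∧ τ.TypeII b ∧
  ∃ i₁ i₂ i₃ i₄ : ℤ, i₁ < i₂ ∧ i₂ < i₃ ∧ i₃ < i₄ ∧ i₄ < i₁ + (Z.length : ℤ) ∧
    Z.e i₁ = a ∧ Z.e i₂ = b ∧ Z.e i₃ = a ∧ Z.e i₄ = b

/-- Two special pairs `c₁,c₂` and `t₁,t₂` are concordant: the zigzag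
interleaves them in the cyclic pattern c₁,t₁,c₂,t₂,c₁,t₁,c₂,t₂. -/
def Concordant (τ : ZOrientation T) (Z : Zigzag T) (c₁ c₂ t₁ t₂ : Finset V) : Prop :=
  τ.SpecialPair Z c₁ c₂ ∧ τ.SpecialPair Z t₁ t₂ ∧
  (c₁ ≠ t₁ ∧ c₁ ≠ t₂ ∧ c₂ ≠ t₁ ∧ c₂ ≠ t₂) ∧
  ∃ i₁ i₂ i₃ i₄ i₅ i₆ i₇ i₈ : ℤ,
    i₁ < i₂ ∧ i₂ < i₃ ∧ i₃ < i₄ ∧ i₄ < i₅ ∧ i₅ < i₆ ∧ i₆ < i₇ ∧ i₇ < i₈ ∧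
    i₈ < i₁ + (Z.length : ℤ) ∧
    Z.e i₁ = c₁ ∧ Z.e i₂ = t₁ ∧ Z.e i₃ = c₂ ∧ Z.e i₄ = t₂ ∧
    Z.e i₅ = c₁ ∧ Z.e i₆ = t₁ ∧ Z.e i₇ = c₂ ∧ Z.e i₈ = t₂

end ZOrientation

end Triangulation

/-- The stellar subdivision of a triangulation: add a new vertex inside each
face and join it to the three vertices of the face. -/
def stellar {V : Type} [DecidableEq V] (T : Triangulation V) :
    Triangulation (V ⊕ {f : Finset V // f ∈ T.faces}) where
  faces := T.faces.attach.biUnion fun f =>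
    (f.1.powersetCard 2).image fun a =>
      insert (Sum.inr f) (a.image (Sum.inl : V → V ⊕ {f : Finset V // f ∈ T.faces}))

/-!
Every face of `stellar T` is a triangle `{inr c, inl x, inl y}` with exactly one new vertex, the
centre `c` of a face of `T`. Hence the heads of any zigzag of `stellar T` are centres exactly every
third step, and around a centre `c` the base vertices run through the triangle `c` of `T`. Since a
zigzag is determined by its sequence of heads, reading off base vertices and centres shows that
every zigzag of `stellar T` is, up to a shift, the lift of a zigzag of `T`. A symmetry between two
lifts must preserve the positions of the centres, the indices `≡ 1 [ZMOD 3]`, so it descends to a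
symmetry between the zigzags of `T`. Thus lifting is a bijection on zigzags up to rotation and
reflection.
-/

section Sequences

variable {α γ : Type*}

/-- `Zigzag.Equiv Z W` unfolds to `DihedralEquiv Z.e W.e`. -/
def DihedralEquiv (a b : ℤ → α) : Prop :=
  (∃ k, ∀ i, b i = a (i + k)) ∨ (∃ k, ∀ i, b i = a (k - i))

theorem DihedralEquiv.symm {a b : ℤ → α} : DihedralEquiv a b → DihedralEquiv b a := by
  rintro (⟨k, h⟩ | ⟨k, h⟩)
  · exact .inl ⟨-k, fun i => by rw [h]; ring_nf⟩
  · exact .inr ⟨k, fun i => by rw [h]; ring_nf⟩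

theorem DihedralEquiv.trans {a b c : ℤ → α} :
    DihedralEquiv a b → DihedralEquiv b c → DihedralEquiv a c := by
  rintro (⟨k, h⟩ | ⟨k, h⟩) (⟨l, h'⟩ | ⟨l, h'⟩)
  · exact .inl ⟨l + k, fun i => by rw [h', h]; ring_nf⟩
  · exact .inr ⟨l + k, fun i => by rw [h', h]; ring_nf⟩
  · exact .inr ⟨k - l, fun i => by rw [h', h]; ring_nf⟩
  · exact .inl ⟨k - l, fun i => by rw [h', h]; ring_nf⟩

theorem Int.forall_of_three_mul_add {P : ℤ → Prop}
    (h : ∀ i, P (3 * i) ∧ P (3 * i + 1) ∧ P (3 * i + 2)) (j : ℤ) : P j := by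
  obtain ⟨i, r, hr, rfl⟩ : ∃ i r : ℤ, (r = 0 ∨ r = 1 ∨ r = 2) ∧ j = 3 * i + r :=
    ⟨j / 3, j % 3, by omega, by omega⟩
  rcases hr with rfl | rfl | rfl
  exacts [by simpa using (h i).1, (h i).2.1, (h i).2.2]

theorem Int.exists_forall_three_mul_add_one {P : ℤ → Prop}
    (hex : ∀ j, P (j - 1) ∨ P j ∨ P (j + 1)) (h₁ : ∀ j, P j → ¬P (j + 1))
    (h₂ : ∀ j, P j → ¬P (j + 2)) : ∃ p, ∀ i, P (p + 3 * i + 1) := by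
  have up : ∀ j, P j → P (j + 3) := fun j hj => by
    rcases hex (j + 2) with h | h | h
    · exact absurd (by simpa [add_sub_assoc] using h) (h₁ j hj)
    · exact absurd h (h₂ j hj)
    · simpa [add_assoc] using h
  have down : ∀ j, P (j + 3) → P j := fun j hj => by
    rcases hex (j + 1) with h | h | h
    · simpa using h
    · exact absurd hj (by simpa [add_assoc] using h₂ (j + 1) h)
    · exact absurd hj (by simpa [add_assoc] using h₁ (j + 1 + 1) h)
  obtain ⟨q, hq⟩ : ∃ q, P q := by rcases hex 0 with h | h | h <;> exact ⟨_, h⟩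
  refine ⟨q - 1, fun i => ?_⟩
  induction i using Int.induction_on with
  | zero => simpa using hq
  | succ i ih =>
    rw [show q - 1 + 3 * (i + 1) + 1 = q - 1 + 3 * i + 1 + 3 by ring]
    exact up _ ih
  | pred i ih =>
    exact down _ (by rwa [show q - 1 + 3 * (-i - 1) + 1 + 3 = q - 1 + 3 * -i + 1 by ring])

def triple [DecidableEq α] (h : ℤ → α) (i : ℤ) : Finset α := {h (i - 1), h i, h (i + 1)}

theorem triple_shift [DecidableEq α] (h : ℤ → α) (k i : ℤ) :
    triple (fun i => h (i + k)) i = triple h (i + k) := by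
  simp only [triple]; ring_nf

theorem triple_reflect [DecidableEq α] (h : ℤ → α) (k i : ℤ) :
    triple (fun i => h (k - i)) i = triple h (k - i) := by
  simp only [triple]
  rw [Finset.insert_comm, Finset.pair_comm, Finset.insert_comm]
  ring_nf

/-- The heads of a lifted zigzag: it runs along the base edge `{a (i - 1), a i}` from `a i` to
`a (i - 1)`, then through the centre `c i` to `a (i + 1)`, and then along the next base edge. -/
def liftSeq (a : ℤ → α) (c : ℤ → γ) (j : ℤ) : α ⊕ γ :=
  if j % 3 = 0 then .inl (a (j / 3 - 1))
  else if j % 3 = 1 then .inr (c (j / 3)) else .inl (a (j / 3 + 1))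

variable {a a' : ℤ → α} {c c' : ℤ → γ} {i j : ℤ}

theorem liftSeq_of_eq_three_mul (h : j = 3 * i) : liftSeq a c j = .inl (a (i - 1)) := by
  simp [liftSeq, show j % 3 = 0 by omega, show j / 3 = i by omega]

theorem liftSeq_of_eq_three_mul_add_one (h : j = 3 * i + 1) : liftSeq a c j = .inr (c i) := by
  simp [liftSeq, show j % 3 = 1 by omega, show j / 3 = i by omega]

theorem liftSeq_of_eq_three_mul_add_two (h : j = 3 * i + 2) :
    liftSeq a c j = .inl (a (i + 1)) := by
  simp [liftSeq, show j % 3 = 2 by omega, show j / 3 = i by omega]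

theorem isRight_liftSeq : (liftSeq a c j).isRight ↔ j % 3 = 1 := by
  unfold liftSeq
  split_ifs <;> simp_all; omega

theorem liftSeq_shift (k : ℤ) :
    liftSeq (fun i => a (i + k)) (fun i => c (i + k)) = fun j => liftSeq a c (j + 3 * k) := by
  funext j
  revert j
  refine Int.forall_of_three_mul_add fun i => ⟨?_, ?_, ?_⟩
  · rw [liftSeq_of_eq_three_mul rfl, liftSeq_of_eq_three_mul (i := i + k) (by ring)]
    ring_nf
  · rw [liftSeq_of_eq_three_mul_add_one rfl,
      liftSeq_of_eq_three_mul_add_one (i := i + k) (by ring)]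
  · rw [liftSeq_of_eq_three_mul_add_two rfl,
      liftSeq_of_eq_three_mul_add_two (i := i + k) (by ring)]
    ring_nf

theorem liftSeq_reflect (k : ℤ) :
    liftSeq (fun i => a (k - i)) (fun i => c (k - i)) =
      fun j => liftSeq a c (3 * k + 2 - j) := by
  funext j
  revert j
  refine Int.forall_of_three_mul_add fun i => ⟨?_, ?_, ?_⟩
  · rw [liftSeq_of_eq_three_mul rfl,
      liftSeq_of_eq_three_mul_add_two (i := k - i) (by ring)]
    ring_nf
  · rw [liftSeq_of_eq_three_mul_add_one rfl,
      liftSeq_of_eq_three_mul_add_one (i := k - i) (by ring)]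
  · rw [liftSeq_of_eq_three_mul_add_two rfl, liftSeq_of_eq_three_mul (i := k - i) (by ring)]
    ring_nf

theorem DihedralEquiv.liftSeq
    (h : DihedralEquiv (fun i => (a i, c i)) (fun i => (a' i, c' i))) :
    DihedralEquiv (_root_.liftSeq a c) (_root_.liftSeq a' c') := by
  simp only [DihedralEquiv, Prod.ext_iff] at h
  rcases h with ⟨k, h⟩ | ⟨k, h⟩
  · have ha : a' = fun i => a (i + k) := funext fun i => (h i).1
    have hc : c' = fun i => c (i + k) := funext fun i => (h i).2
    exact .inl ⟨3 * k, fun j => by rw [ha, hc, liftSeq_shift]⟩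
  · have ha : a' = fun i => a (k - i) := funext fun i => (h i).1
    have hc : c' = fun i => c (k - i) := funext fun i => (h i).2
    exact .inr ⟨3 * k + 2, fun j => by rw [ha, hc, liftSeq_reflect]⟩

/-- The `inr` terms sit at the indices `≡ 1 [ZMOD 3]`, which pins a symmetry of `liftSeq a c`
down to a translation by `3 * k` or a reflection `j ↦ 3 * k + 2 - j`. -/
theorem DihedralEquiv.of_liftSeq
    (h : DihedralEquiv (_root_.liftSeq a c) (_root_.liftSeq a' c')) :
    DihedralEquiv a a' := by
  rcases h with ⟨m, h⟩ | ⟨m, h⟩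
  · have hm : (1 + m) % 3 = 1 := isRight_liftSeq.1 (by rw [← h]; simp [isRight_liftSeq])
    refine .inl ⟨m / 3, fun i => ?_⟩
    have := h (3 * (i + 1))
    rwa [liftSeq_of_eq_three_mul rfl, liftSeq_of_eq_three_mul (i := i + 1 + m / 3) (by omega),
      Sum.inl.injEq, add_sub_cancel_right, add_right_comm, add_sub_cancel_right] at this
  · have hm : (m - 1) % 3 = 1 := isRight_liftSeq.1 (by rw [← h]; simp [isRight_liftSeq])
    refine .inr ⟨m / 3, fun i => ?_⟩
    have := h (3 * (i + 1))
    rwa [liftSeq_of_eq_three_mul rfl,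
      liftSeq_of_eq_three_mul_add_two (i := m / 3 - i - 1) (by omega),
      Sum.inl.injEq, add_sub_cancel_right, sub_add_cancel] at this

section Triple

variable [DecidableEq α] [DecidableEq γ]

theorem triple_liftSeq_three_mul :
    triple (liftSeq a c) (3 * i) = insert (.inr (c i)) {.inl (a (i - 1)), .inl (a i)} := by
  rw [triple, liftSeq_of_eq_three_mul_add_two (i := i - 1) (by ring), liftSeq_of_eq_three_mul rfl,
    liftSeq_of_eq_three_mul_add_one rfl, sub_add_cancel]
  ext; simp only [Finset.mem_insert, Finset.mem_singleton]; tauto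

theorem triple_liftSeq_three_mul_add_one :
    triple (liftSeq a c) (3 * i + 1) =
      insert (.inr (c i)) {.inl (a (i - 1)), .inl (a (i + 1))} := by
  rw [triple, add_sub_cancel_right, liftSeq_of_eq_three_mul rfl,
    liftSeq_of_eq_three_mul_add_one rfl, liftSeq_of_eq_three_mul_add_two (by ring)]
  ext; simp only [Finset.mem_insert, Finset.mem_singleton]; tauto

theorem triple_liftSeq_three_mul_add_two :
    triple (liftSeq a c) (3 * i + 2) = insert (.inr (c i)) {.inl (a i), .inl (a (i + 1))} := by
  rw [triple, liftSeq_of_eq_three_mul_add_one (by ring), liftSeq_of_eq_three_mul_add_two rfl,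
    liftSeq_of_eq_three_mul (i := i + 1) (by ring), add_sub_cancel_right]
  ext; simp only [Finset.mem_insert, Finset.mem_singleton]; tauto

end Triple

end Sequences

theorem Finset.ne_of_card_triple_eq_three {α : Type*} [DecidableEq α] {x y z : α}
    (h : ({x, y, z} : Finset α).card = 3) : x ≠ y ∧ x ≠ z ∧ y ≠ z := by
  refine ⟨fun hxy => ?_, fun hxz => ?_, fun hyz => ?_⟩ <;> subst_vars <;>
    simp only [Finset.mem_insert, Finset.mem_singleton, true_or, or_true,
      Finset.insert_eq_of_mem] at h <;>
    exact absurd h (Finset.card_le_two.trans_lt (by norm_num)).ne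

theorem Finset.eq_of_mem_of_card_eq_three {α : Type*} [DecidableEq α] {s : Finset α}
    (hs : s.card = 3) {x y z w : α} (hx : x ∈ s) (hy : y ∈ s) (hz : z ∈ s) (hxy : x ≠ y)
    (hxz : x ≠ z) (hyz : y ≠ z) (hw : w ∈ s) (hwy : w ≠ y) (hwz : w ≠ z) : w = x := by
  have hsub : {x, y, z} ⊆ s := by simp [Finset.insert_subset_iff, hx, hy, hz]
  have hcard : s.card ≤ ({x, y, z} : Finset α).card := by
    rw [hs, Finset.card_eq_three.2 ⟨x, y, z, hxy, hxz, hyz, rfl⟩]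
  rw [← Finset.eq_of_subset_of_card_le hsub hcard] at hw
  simpa [hwy, hwz] using hw

namespace Triangulation

variable {V : Type} [DecidableEq V] {T : Triangulation V}

theorem card_of_mem_edges {a : Finset V} (h : a ∈ T.edges) : a.card = 2 := by
  obtain ⟨f, -, ha⟩ := Finset.mem_biUnion.1 h
  exact (Finset.mem_powersetCard.1 ha).2

theorem mem_edges_of_subset {a f : Finset V} (hf : f ∈ T.faces) (ha : a ⊆ f) (h2 : a.card = 2) :
    a ∈ T.edges :=
  Finset.mem_biUnion.2 ⟨f, hf, Finset.mem_powersetCard.2 ⟨ha, h2⟩⟩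

theorem ne_of_triple_mem_faces {h : ℤ → V} (hT : ∀ f ∈ T.faces, f.card = 3)
    (hface : ∀ i, triple h i ∈ T.faces) (hne : ∀ i, triple h i ≠ triple h (i + 1)) (i : ℤ) :
    h (i - 1) ≠ h i ∧ h (i - 1) ≠ h (i + 1) ∧ h (i - 1) ≠ h (i + 2) ∧
      h i ≠ h (i + 1) ∧ h i ≠ h (i + 2) ∧ h (i + 1) ≠ h (i + 2) := by
  obtain ⟨h₀₁, h₀₂, h₁₂⟩ := Finset.ne_of_card_triple_eq_three (hT _ (hface i))
  obtain ⟨-, h₁₃, h₂₃⟩ := Finset.ne_of_card_triple_eq_three (hT _ (hface (i + 1)))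
  simp only [add_sub_cancel_right, add_assoc, Int.reduceAdd] at h₁₃ h₂₃
  refine ⟨h₀₁, h₀₂, fun h₀₃ => hne i ?_, h₁₂, h₁₃, h₂₃⟩
  simp only [triple, add_sub_cancel_right, add_assoc, Int.reduceAdd, h₀₃]
  ext; simp only [Finset.mem_insert, Finset.mem_singleton]; tauto

theorem mem_stellar_faces {g : Finset (V ⊕ {f : Finset V // f ∈ T.faces})} :
    g ∈ (stellar T).faces ↔ ∃ (c : {f : Finset V // f ∈ T.faces}) (a : Finset V),
      a ⊆ c.1 ∧ a.card = 2 ∧ insert (.inr c) (a.image .inl) = g := by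
  simp [stellar, Finset.mem_powersetCard, and_assoc]

theorem card_of_mem_stellar_faces {g : Finset (V ⊕ {f : Finset V // f ∈ T.faces})}
    (hg : g ∈ (stellar T).faces) : g.card = 3 := by
  obtain ⟨c, a, -, ha, rfl⟩ := mem_stellar_faces.1 hg
  rw [Finset.card_insert_of_notMem (by simp), Finset.card_image_of_injective _ Sum.inl_injective,
    ha]

theorem insert_inr_pair_mem_stellar_faces (c : {f : Finset V // f ∈ T.faces}) {x y : V}
    (hx : x ∈ c.1) (hy : y ∈ c.1) (hxy : x ≠ y) :
    insert (.inr c) {.inl x, .inl y} ∈ (stellar T).faces :=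
  mem_stellar_faces.2 ⟨c, {x, y}, by simp [Finset.insert_subset_iff, hx, hy],
    Finset.card_pair hxy, by simp⟩

section StellarFace

variable {g : Finset (V ⊕ {f : Finset V // f ∈ T.faces})} {c c' : {f : Finset V // f ∈ T.faces}}

theorem exists_inr_mem_of_mem_stellar_faces (hg : g ∈ (stellar T).faces) : ∃ c, .inr c ∈ g := by
  obtain ⟨c, a, -, -, rfl⟩ := mem_stellar_faces.1 hg
  exact ⟨c, Finset.mem_insert_self _ _⟩

theorem eq_of_inr_mem_of_mem_stellar_faces (hg : g ∈ (stellar T).faces) (hc : .inr c ∈ g)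
    (hc' : .inr c' ∈ g) : c = c' := by
  obtain ⟨c₀, a, -, -, rfl⟩ := mem_stellar_faces.1 hg
  simp_all

theorem mem_of_inl_mem_of_mem_stellar_faces (hg : g ∈ (stellar T).faces) {x : V}
    (hc : .inr c ∈ g) (hx : .inl x ∈ g) : x ∈ c.1 := by
  obtain ⟨c₀, a, ha, -, rfl⟩ := mem_stellar_faces.1 hg
  simp only [Finset.mem_insert, Sum.inr.injEq, Finset.mem_image, reduceCtorEq, and_false,
    exists_false, or_false, Sum.inl.injEq, exists_eq_right, false_or] at hc hx
  exact hc ▸ ha hx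

end StellarFace

namespace Zigzag

variable (Z : T.Zigzag) (i : ℤ)

theorem card_e : (Z.e i).card = 2 := card_of_mem_edges (Z.e_mem i)

theorem head_mem_e_inter : Z.head i ∈ Z.e i ∩ Z.e (i + 1) := by
  rw [Z.inter_eq]; exact Finset.mem_singleton_self _

theorem head_mem_e : Z.head i ∈ Z.e i := (Finset.mem_inter.1 (Z.head_mem_e_inter i)).1

theorem head_mem_e_succ : Z.head i ∈ Z.e (i + 1) :=
  (Finset.mem_inter.1 (Z.head_mem_e_inter i)).2

theorem head_pred_mem_e : Z.head (i - 1) ∈ Z.e i := by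
  simpa using Z.head_mem_e_succ (i - 1)

theorem head_ne_head_add_one : Z.head i ≠ Z.head (i + 1) := fun h =>
  Finset.disjoint_left.1 (Z.disj i) (Z.head_mem_e i)
    (by rw [h]; simpa [add_assoc] using Z.head_mem_e_succ (i + 1))

theorem head_ne_head_add_two : Z.head i ≠ Z.head (i + 2) := fun h =>
  Finset.disjoint_left.1 (Z.disj (i + 1)) (Z.head_mem_e_succ i)
    (by rw [h]; simpa [add_assoc] using Z.head_mem_e_succ (i + 2))

theorem head_ne_head_add_three : Z.head i ≠ Z.head (i + 3) := fun h =>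
  Finset.disjoint_left.1 (Z.disj (i + 1)) (Z.head_mem_e_succ i)
    (by rw [h]; simpa [add_assoc] using Z.head_mem_e (i + 3))

theorem head_ne_head {i j : ℤ} (hij : i ≠ j) (h₁ : i ≤ j + 3) (h₂ : j ≤ i + 3) :
    Z.head i ≠ Z.head j := by
  rcases lt_or_gt_of_ne hij with h | h
  · obtain rfl | rfl | rfl : j = i + 1 ∨ j = i + 2 ∨ j = i + 3 := by omega
    exacts [Z.head_ne_head_add_one i, Z.head_ne_head_add_two i, Z.head_ne_head_add_three i]
  · obtain rfl | rfl | rfl : i = j + 1 ∨ i = j + 2 ∨ i = j + 3 := by omega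
    exacts [(Z.head_ne_head_add_one j).symm, (Z.head_ne_head_add_two j).symm,
      (Z.head_ne_head_add_three j).symm]

theorem e_eq_pair : Z.e i = {Z.head (i - 1), Z.head i} := by
  refine (Finset.eq_of_subset_of_card_le ?_ ?_).symm
  · simp [Finset.insert_subset_iff, Z.head_pred_mem_e, Z.head_mem_e]
  · rw [Z.card_e, Finset.card_pair (by simpa using Z.head_ne_head_add_one (i - 1))]

theorem triple_head_subset_f : triple Z.head i ⊆ Z.f i := by
  simp only [triple, Finset.insert_subset_iff, Finset.singleton_subset_iff]
  exact ⟨Z.sub_left i (Z.head_pred_mem_e i), Z.sub_left i (Z.head_mem_e i),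
    Z.sub_right i (Z.head_mem_e (i + 1))⟩

theorem head_mem_f {i j : ℤ} (h₁ : i ≤ j + 1) (h₂ : j ≤ i + 1) : Z.head j ∈ Z.f i := by
  obtain rfl | rfl | rfl : i = j + 1 ∨ i = j ∨ i = j - 1 := by omega
  all_goals exact Z.triple_head_subset_f _ (by simp [triple])

theorem exists_head_mem_f {i j : ℤ} (h₁ : i ≤ j + 2) (h₂ : j ≤ i + 2) :
    ∃ m, Z.head i ∈ Z.f m ∧ Z.head j ∈ Z.f m :=
  ⟨(i + j) / 2, Z.head_mem_f (by omega) (by omega), Z.head_mem_f (by omega) (by omega)⟩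

theorem card_triple_head : (triple Z.head i).card = 3 :=
  Finset.card_eq_three.2 ⟨_, _, _, by simpa using Z.head_ne_head_add_one (i - 1),
    by simpa [sub_add] using Z.head_ne_head_add_two (i - 1), Z.head_ne_head_add_one i, rfl⟩

theorem f_eq_triple (hT : ∀ f ∈ T.faces, f.card = 3) : Z.f i = triple Z.head i :=
  (Finset.eq_of_subset_of_card_le (Z.triple_head_subset_f i)
    (by rw [hT _ (Z.f_mem i), Z.card_triple_head])).symm

variable {Z} in
theorem equiv_iff {W : T.Zigzag} : Z.Equiv W ↔ DihedralEquiv Z.head W.head := by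
  constructor
  · rintro (⟨k, h⟩ | ⟨k, h⟩)
    · refine .inl ⟨k, fun i => Finset.singleton_injective ?_⟩
      rw [← W.inter_eq, ← Z.inter_eq, h, h, add_right_comm]
    · refine .inr ⟨k - 1, fun i => Finset.singleton_injective ?_⟩
      rw [← W.inter_eq, ← Z.inter_eq, h, h, Finset.inter_comm]
      ring_nf
  · rintro (⟨k, h⟩ | ⟨k, h⟩)
    · refine .inl ⟨k, fun i => ?_⟩
      rw [W.e_eq_pair, Z.e_eq_pair, h, h]
      ring_nf
    · refine .inr ⟨k + 1, fun i => ?_⟩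
      rw [W.e_eq_pair, Z.e_eq_pair, h, h, Finset.pair_comm]
      ring_nf

variable {Z}

theorem Equiv.symm {W : T.Zigzag} (h : Z.Equiv W) : W.Equiv Z := DihedralEquiv.symm h

theorem Equiv.trans {W Y : T.Zigzag} (h : Z.Equiv W) (h' : W.Equiv Y) : Z.Equiv Y :=
  DihedralEquiv.trans h h'

def ofHeads (hT : ∀ f ∈ T.faces, f.card = 3) (h : ℤ → V) (hface : ∀ i, triple h i ∈ T.faces)
    (hne : ∀ i, triple h i ≠ triple h (i + 1)) (hper : ∃ n : ℕ, 0 < n ∧ Function.Periodic h n) :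
    T.Zigzag where
  e i := {h (i - 1), h i}
  f := triple h
  head := h
  e_mem i := mem_edges_of_subset (hface i) (by simp [triple])
    (Finset.card_pair (ne_of_triple_mem_faces hT hface hne i).1)
  f_mem := hface
  sub_left i := by simp [triple]
  sub_right i := by simp [triple]
  edges_ne i heq := by
    have := ne_of_triple_mem_faces hT hface hne i
    have : h (i - 1) ∈ ({h (i + 1 - 1), h (i + 1)} : Finset V) :=
      heq ▸ Finset.mem_insert_self _ _
    simp_all
  faces_ne := hne
  disj i := by
    have := ne_of_triple_mem_faces hT hface hne i
    simp only [Finset.disjoint_insert_left, Finset.disjoint_singleton_left, Finset.mem_insert,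
      Finset.mem_singleton, add_sub_assoc, Int.reduceSub]
    tauto
  inter_eq i := by
    have := ne_of_triple_mem_faces hT hface hne i
    ext v
    simp only [Finset.mem_inter, Finset.mem_insert, Finset.mem_singleton, add_sub_cancel_right]
    constructor
    · rintro ⟨rfl | rfl, _ | _⟩ <;> simp_all
    · rintro rfl; simp
  exists_period := by
    obtain ⟨n, hn, hp⟩ := hper
    refine ⟨n, hn, fun i => ⟨?_, ?_, hp i⟩⟩
    · rw [show i + n - 1 = i - 1 + n by ring, hp, hp]
    · rw [triple, triple, show i + n - 1 = i - 1 + n by ring, add_right_comm, hp, hp, hp]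

section Lift

variable (Z : T.Zigzag)

def centre (i : ℤ) : {f : Finset V // f ∈ T.faces} := ⟨Z.f i, Z.f_mem i⟩

theorem coe_centre (hT : ∀ f ∈ T.faces, f.card = 3) (i : ℤ) : (Z.centre i).1 = triple Z.head i :=
  Z.f_eq_triple i hT

theorem triple_liftSeq_mem_stellar_faces (j : ℤ) :
    triple (liftSeq Z.head Z.centre) j ∈ (stellar T).faces := by
  revert j
  refine Int.forall_of_three_mul_add fun i => ⟨?_, ?_, ?_⟩
  · rw [triple_liftSeq_three_mul]
    exact insert_inr_pair_mem_stellar_faces _ (Z.head_mem_f (by omega) (by omega))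
      (Z.head_mem_f (by omega) (by omega)) (Z.head_ne_head (by omega) (by omega) (by omega))
  · rw [triple_liftSeq_three_mul_add_one]
    exact insert_inr_pair_mem_stellar_faces _ (Z.head_mem_f (by omega) (by omega))
      (Z.head_mem_f (by omega) (by omega)) (Z.head_ne_head (by omega) (by omega) (by omega))
  · rw [triple_liftSeq_three_mul_add_two]
    exact insert_inr_pair_mem_stellar_faces _ (Z.head_mem_f (by omega) (by omega))
      (Z.head_mem_f (by omega) (by omega)) (Z.head_ne_head (by omega) (by omega) (by omega))

theorem triple_liftSeq_ne (j : ℤ) :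
    triple (liftSeq Z.head Z.centre) j ≠ triple (liftSeq Z.head Z.centre) (j + 1) := by
  revert j
  refine Int.forall_of_three_mul_add fun i => ⟨fun h => ?_, fun h => ?_, fun h => ?_⟩
  · rw [triple_liftSeq_three_mul, triple_liftSeq_three_mul_add_one] at h
    have := Finset.ext_iff.1 h (.inl (Z.head (i + 1)))
    simp only [Finset.mem_insert, Finset.mem_singleton, reduceCtorEq, Sum.inl.injEq,
      false_or, or_true, iff_true] at this
    rcases this with h' | h'
    exacts [Z.head_ne_head (by omega) (by omega) (by omega) h',
      Z.head_ne_head (by omega) (by omega) (by omega) h']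
  · rw [triple_liftSeq_three_mul_add_one, show 3 * i + 1 + 1 = 3 * i + 2 by ring,
      triple_liftSeq_three_mul_add_two] at h
    have := Finset.ext_iff.1 h (.inl (Z.head i))
    simp only [Finset.mem_insert, Finset.mem_singleton, reduceCtorEq, Sum.inl.injEq,
      false_or, true_or, iff_true] at this
    rcases this with h' | h'
    exacts [Z.head_ne_head (by omega) (by omega) (by omega) h',
      Z.head_ne_head (by omega) (by omega) (by omega) h']
  · rw [triple_liftSeq_three_mul_add_two, show 3 * i + 2 + 1 = 3 * (i + 1) by ring,
      triple_liftSeq_three_mul] at h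
    have := Finset.ext_iff.1 h (.inr (Z.centre (i + 1)))
    simp only [Finset.mem_insert, Finset.mem_singleton, reduceCtorEq, Sum.inr.injEq,
      or_false, iff_true] at this
    exact Z.faces_ne i (congrArg Subtype.val this).symm

theorem exists_periodic_liftSeq :
    ∃ n : ℕ, 0 < n ∧ Function.Periodic (liftSeq Z.head Z.centre) n := by
  obtain ⟨n, hn, hp⟩ := Z.exists_period
  have hh : (fun i => Z.head (i + n)) = Z.head := funext fun i => (hp i).2.2
  have hc : (fun i => Z.centre (i + n)) = Z.centre := funext fun i => Subtype.ext (hp i).2.1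
  refine ⟨3 * n, by omega, fun j => ?_⟩
  have := congrFun (liftSeq_shift (a := Z.head) (c := Z.centre) n) j
  rw [hh, hc] at this
  push_cast
  exact this.symm

def lift : (stellar T).Zigzag :=
  ofHeads (fun _ => card_of_mem_stellar_faces) (liftSeq Z.head Z.centre)
    Z.triple_liftSeq_mem_stellar_faces Z.triple_liftSeq_ne Z.exists_periodic_liftSeq

theorem lift_head : Z.lift.head = liftSeq Z.head Z.centre := rfl

theorem lift_e_three_mul (i : ℤ) : Z.lift.e (3 * i) = (Z.e i).image Sum.inl := by
  rw [e_eq_pair, e_eq_pair, lift_head, liftSeq_of_eq_three_mul_add_two (i := i - 1) (by ring),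
    liftSeq_of_eq_three_mul rfl, sub_add_cancel, Finset.pair_comm]
  simp

theorem inr_centre_mem_lift_e_three_mul_add_one (i : ℤ) :
    .inr (Z.centre i) ∈ Z.lift.e (3 * i + 1) := by
  simpa [lift_head, liftSeq_of_eq_three_mul_add_one] using Z.lift.head_mem_e (3 * i + 1)

theorem inr_centre_mem_lift_e_three_mul_add_two (i : ℤ) :
    .inr (Z.centre i) ∈ Z.lift.e (3 * i + 2) := by
  simpa [lift_head, liftSeq_of_eq_three_mul_add_one, add_assoc] using
    Z.lift.head_mem_e_succ (3 * i + 1)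

end Lift

section Stellar

variable (W : (stellar T).Zigzag) {c : {f : Finset V // f ∈ T.faces}} {i j : ℤ}

theorem isRight_head_window (j : ℤ) :
    (W.head (j - 1)).isRight ∨ (W.head j).isRight ∨ (W.head (j + 1)).isRight := by
  obtain ⟨c, hc⟩ := exists_inr_mem_of_mem_stellar_faces (W.f_mem j)
  rw [W.f_eq_triple j (fun _ => card_of_mem_stellar_faces), triple] at hc
  simp only [Finset.mem_insert, Finset.mem_singleton] at hc
  rcases hc with h | h | h <;> simp [← h]

theorem not_isRight_head (hi : (W.head i).isRight) (hij : i ≠ j) (h₁ : i ≤ j + 2)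
    (h₂ : j ≤ i + 2) : ¬(W.head j).isRight := fun hj => by
  obtain ⟨c, hc⟩ := Sum.isRight_iff.1 hi
  obtain ⟨c', hc'⟩ := Sum.isRight_iff.1 hj
  obtain ⟨m, him, hjm⟩ := W.exists_head_mem_f h₁ h₂
  rw [hc] at him
  rw [hc'] at hjm
  refine W.head_ne_head hij (by omega) (by omega) ?_
  rw [hc, hc', eq_of_inr_mem_of_mem_stellar_faces (W.f_mem m) him hjm]

theorem mem_of_head_eq_inr {x : V} (hi : W.head i = .inr c) (hj : W.head j = .inl x)
    (h₁ : i ≤ j + 2) (h₂ : j ≤ i + 2) : x ∈ c.1 := by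
  obtain ⟨m, him, hjm⟩ := W.exists_head_mem_f h₁ h₂
  rw [hi] at him
  rw [hj] at hjm
  exact mem_of_inl_mem_of_mem_stellar_faces (W.f_mem m) him hjm

theorem exists_forall_head_isRight : ∃ p, ∀ i, (W.head (p + 3 * i + 1)).isRight :=
  Int.exists_forall_three_mul_add_one (P := fun j => (W.head j).isRight) W.isRight_head_window
    (fun j hj => W.not_isRight_head hj (j := j + 1) (by omega) (by omega) (by omega))
    (fun j hj => W.not_isRight_head hj (j := j + 2) (by omega) (by omega) (by omega))

theorem exists_head_eq_inl (hi : (W.head i).isRight) (hij : i ≠ j) (h₁ : i ≤ j + 2)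
    (h₂ : j ≤ i + 2) : ∃ x, W.head j = .inl x :=
  Sum.isLeft_iff.1 (Sum.not_isRight.1 (W.not_isRight_head hi hij h₁ h₂))

theorem ne_of_head_eq_inl {x x' : V} (hx : W.head i = .inl x) (hx' : W.head j = .inl x')
    (hij : i ≠ j) (h₁ : i ≤ j + 3) (h₂ : j ≤ i + 3) : x ≠ x' := fun h =>
  W.head_ne_head hij h₁ h₂ (by rw [hx, hx', h])

/-- The base vertices at distance at most two from a centre `c` lie in the triangle `c`; the
one at `i + 2` differs from those at `i ± 1`, so it is the one at `i - 2`. -/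
theorem head_add_two_eq_head_sub_two (hT : ∀ f ∈ T.faces, f.card = 3)
    (hi : W.head i = .inr c) : W.head (i + 2) = W.head (i - 2) := by
  have hR : (W.head i).isRight := by simp [hi]
  obtain ⟨a, ha⟩ := W.exists_head_eq_inl hR (j := i - 2) (by omega) (by omega) (by omega)
  obtain ⟨b, hb⟩ := W.exists_head_eq_inl hR (j := i - 1) (by omega) (by omega) (by omega)
  obtain ⟨d, hd⟩ := W.exists_head_eq_inl hR (j := i + 1) (by omega) (by omega) (by omega)
  obtain ⟨e, he⟩ := W.exists_head_eq_inl hR (j := i + 2) (by omega) (by omega) (by omega)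
  have hmem {j : ℤ} {x : V} (hx : W.head j = .inl x) (h₁ : i ≤ j + 2) (h₂ : j ≤ i + 2) :
      x ∈ c.1 :=
    W.mem_of_head_eq_inr hi hx h₁ h₂
  rw [ha, he, Finset.eq_of_mem_of_card_eq_three (hT _ c.2)
    (hmem ha (by omega) (by omega)) (hmem hb (by omega) (by omega))
    (hmem hd (by omega) (by omega))
    (W.ne_of_head_eq_inl ha hb (by omega) (by omega) (by omega))
    (W.ne_of_head_eq_inl ha hd (by omega) (by omega) (by omega))
    (W.ne_of_head_eq_inl hb hd (by omega) (by omega) (by omega)) (hmem he (by omega) (by omega))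
    (W.ne_of_head_eq_inl he hb (by omega) (by omega) (by omega))
    (W.ne_of_head_eq_inl he hd (by omega) (by omega) (by omega))]

theorem exists_head_eq_liftSeq (hT : ∀ f ∈ T.faces, f.card = 3) :
    ∃ (p : ℤ) (x : ℤ → V) (c : ℤ → {f : Finset V // f ∈ T.faces}),
      ∀ j, W.head (j + p) = liftSeq x c j := by
  obtain ⟨p, hp⟩ := W.exists_forall_head_isRight
  choose c hc using fun i => Sum.isRight_iff.1 (hp i)
  choose x hx using fun i =>
    W.exists_head_eq_inl (hp i) (j := p + 3 * i + 3) (by omega) (by omega) (by omega)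
  refine ⟨p, x, c, Int.forall_of_three_mul_add fun i => ⟨?_, ?_, ?_⟩⟩
  · rw [liftSeq_of_eq_three_mul rfl, ← hx]
    ring_nf
  · rw [liftSeq_of_eq_three_mul_add_one rfl, ← hc]
    ring_nf
  · rw [liftSeq_of_eq_three_mul_add_two rfl, ← hx,
      show p + 3 * (i + 1) + 3 = p + 3 * (i + 1) + 1 + 2 by ring,
      W.head_add_two_eq_head_sub_two hT (hc (i + 1))]
    ring_nf

theorem triple_eq_of_head_eq_liftSeq (hT : ∀ f ∈ T.faces, f.card = 3) {p : ℤ} {x : ℤ → V}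
    {c : ℤ → {f : Finset V // f ∈ T.faces}} (hW : ∀ j, W.head (j + p) = liftSeq x c j) (i : ℤ) :
    triple x i = (c i).1 := by
  have h₀ := hW (3 * i)
  have h₁ := hW (3 * i + 1)
  have h₂ := hW (3 * i + 2)
  have h₃ := hW (3 * (i + 1))
  rw [liftSeq_of_eq_three_mul rfl] at h₀ h₃
  rw [liftSeq_of_eq_three_mul_add_one rfl] at h₁
  rw [liftSeq_of_eq_three_mul_add_two rfl] at h₂
  rw [add_sub_cancel_right] at h₃
  refine Finset.eq_of_subset_of_card_le ?_ ?_
  · simp only [triple, Finset.insert_subset_iff, Finset.singleton_subset_iff]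
    exact ⟨W.mem_of_head_eq_inr h₁ h₀ (by omega) (by omega),
      W.mem_of_head_eq_inr h₁ h₃ (by omega) (by omega),
      W.mem_of_head_eq_inr h₁ h₂ (by omega) (by omega)⟩
  · rw [hT _ (c i).2, triple, Finset.card_eq_three.2 ⟨_, _, _,
      W.ne_of_head_eq_inl h₀ h₃ (by omega) (by omega) (by omega),
      W.ne_of_head_eq_inl h₀ h₂ (by omega) (by omega) (by omega),
      W.ne_of_head_eq_inl h₃ h₂ (by omega) (by omega) (by omega), rfl⟩]

theorem exists_lift_equiv (hT : ∀ f ∈ T.faces, f.card = 3) :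
    ∃ Z : T.Zigzag, Z.lift.Equiv W := by
  obtain ⟨p, x, c, hW⟩ := W.exists_head_eq_liftSeq hT
  have htriple := W.triple_eq_of_head_eq_liftSeq hT hW
  have hne (i : ℤ) : triple x i ≠ triple x (i + 1) := fun h => by
    have h₁ := hW (3 * i + 1)
    have h₄ := hW (3 * (i + 1) + 1)
    rw [liftSeq_of_eq_three_mul_add_one rfl] at h₁ h₄
    refine W.head_ne_head_add_three (3 * i + 1 + p) ?_
    rw [h₁, show 3 * i + 1 + p + 3 = 3 * (i + 1) + 1 + p by ring, h₄,
      (Subtype.ext (by rw [← htriple, ← htriple, h]) : c i = c (i + 1))]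
  have hper : ∃ n : ℕ, 0 < n ∧ Function.Periodic x n := by
    obtain ⟨n, hn, hWper⟩ := W.exists_period
    have hH : Function.Periodic W.head n := fun j => (hWper j).2.2
    refine ⟨n, hn, fun i => Sum.inl_injective (β := {f : Finset V // f ∈ T.faces}) ?_⟩
    have h := hW (3 * (i + n + 1))
    rw [liftSeq_of_eq_three_mul rfl, add_sub_cancel_right,
      show 3 * (i + n + 1) + p = 3 * (i + 1) + p + n + n + n by ring,
      hH, hH, hH, hW,
      liftSeq_of_eq_three_mul rfl, add_sub_cancel_right] at h
    exact h.symm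
  let Z := ofHeads hT x (fun i => htriple i ▸ (c i).2) hne hper
  have hc : Z.centre = c := funext fun i => Subtype.ext (htriple i)
  refine ⟨Z, equiv_iff.2 (.inl ⟨-p, fun j => ?_⟩)⟩
  change W.head j = liftSeq x Z.centre (j + -p)
  rw [hc, ← hW, neg_add_cancel_right]

end Stellar

theorem Equiv.lift (hT : ∀ f ∈ T.faces, f.card = 3) {Z Z' : T.Zigzag} (h : Z.Equiv Z') :
    Z.lift.Equiv Z'.lift := by
  rw [equiv_iff, lift_head, lift_head]
  refine DihedralEquiv.liftSeq ?_
  rcases equiv_iff.1 h with ⟨k, h⟩ | ⟨k, h⟩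
  · have hh : Z'.head = fun i => Z.head (i + k) := funext h
    refine .inl ⟨k, fun i => Prod.ext (h i) (Subtype.ext ?_)⟩
    rw [Z'.coe_centre hT, Z.coe_centre hT, hh, triple_shift]
  · have hh : Z'.head = fun i => Z.head (k - i) := funext h
    refine .inr ⟨k, fun i => Prod.ext (h i) (Subtype.ext ?_)⟩
    rw [Z'.coe_centre hT, Z.coe_centre hT, hh, triple_reflect]

theorem Equiv.of_lift {Z Z' : T.Zigzag} (h : Z.lift.Equiv Z'.lift) : Z.Equiv Z' :=
  equiv_iff.2 (DihedralEquiv.of_liftSeq (equiv_iff.1 h))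

end Zigzag

end Triangulation

/-- If `Γ'` is a triangulation of a surface, then every zigzag
`e₁, e₂, e₃, …` in `Γ'` extends to a zigzag `e₁, e'₁, e''₁, e₂, e'₂, e''₂, e₃, …`
in the stellar subdivision `T(Γ')`, where `e'ᵢ` and `e''ᵢ` are edges incident
to the new face-vertices; consequently `T(Γ')` is z-knotted if and only if
`Γ'` is z-knotted. -/
theorem stmt9 {V : Type} [DecidableEq V] (T : Triangulation V) (hT : T.IsProper) :
    (∀ Z : T.Zigzag, ∃ W : (stellar T).Zigzag, ∀ i : ℤ,
      W.e (3 * i) = (Z.e i).image Sum.inl ∧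
      (∃ c, Sum.inr c ∈ W.e (3 * i + 1)) ∧
      (∃ c, Sum.inr c ∈ W.e (3 * i + 2))) ∧
    (T.IsZKnotted ↔ (stellar T).IsZKnotted) := by
  refine ⟨fun Z => ⟨Z.lift, fun i => ⟨Z.lift_e_three_mul i,
    ⟨_, Z.inr_centre_mem_lift_e_three_mul_add_one i⟩,
    ⟨_, Z.inr_centre_mem_lift_e_three_mul_add_two i⟩⟩⟩, ⟨?_, ?_⟩⟩
  · rintro ⟨⟨Z⟩, hZ⟩
    refine ⟨⟨Z.lift⟩, fun W W' => ?_⟩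
    obtain ⟨Y, hY⟩ := W.exists_lift_equiv hT.1
    obtain ⟨Y', hY'⟩ := W'.exists_lift_equiv hT.1
    exact hY.symm.trans (((hZ Y Y').lift hT.1).trans hY')
  · rintro ⟨⟨W⟩, hW⟩
    obtain ⟨Z, -⟩ := W.exists_lift_equiv hT.1
    exact ⟨⟨Z⟩, fun Z Z' => (hW Z.lift Z'.lift).of_lift⟩
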